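/- There exist a finite colour set B₀, a tileset Θ₀ ⊆ B₀ × {x,y,z} × B₀, a colour a₀ ∈ B₀ and a subset C ⊆ B₀ such that: there is exactly one valid Θ₀-tiling τ of the Barbieri–Sablik H-graph with τ(0,0) = a₀, and this tiling satisfies τ(m,n) ∈ C if and only if (m,n) = (2^{s+1} − 1, 2^s k) for some s ≥ 0 and k ∈ ℤ (that is, the colours in C mark exactly the vertex set of the hyperbolic horoball). -/

import Mathlib

/-!  Common definitions for the Barbieri–Sablik H-graph.  Its vertex set is `ℕ × ℤ`. -/

/-- The three edge labels of the H-graph. -/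
inductive HLab : Type
  | x : HLab
  | y : HLab
  | z : HLab
deriving DecidableEq

instance : Primcodable HLab :=
  Primcodable.ofEquiv (Fin 3)
    { toFun := fun l => match l with | .x => 0 | .y => 1 | .z => 2
      invFun := fun i => match i with | 0 => .x | 1 => .y | 2 => .z
      left_inv := by intro l; cases l <;> rfl
      right_inv := by intro i; fin_cases i <;> rfl }

/-- The `x`-neighbour of a vertex: `(2m,n)` and `(2m+1,n)` are exchanged. -/
def xNbr : ℕ × ℤ → ℕ × ℤ := fun p => (if p.1 % 2 = 0 then p.1 + 1 else p.1 - 1, p.2)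

/-- The `y`-neighbour of a vertex: for even `k ≥ 2` and `2^(v₂ k) ∣ n`, the vertices
`(k-1,n)` and `(k,n)` are exchanged; all other vertices (namely `(0,n)`, and `(k-1,n)`,
`(k,n)` with `2^(v₂ k) ∤ n`) carry a `y`-labelled loop, i.e. are fixed. -/
def yNbr : ℕ × ℤ → ℕ × ℤ := fun p =>
  if p.1 = 0 then p
  else if p.1 % 2 = 1 then
    (if ((2 : ℤ) ^ padicValNat 2 (p.1 + 1)) ∣ p.2 then (p.1 + 1, p.2) else p)
  else
    (if ((2 : ℤ) ^ padicValNat 2 p.1) ∣ p.2 then (p.1 - 1, p.2) else p)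

/-- A map `τ : ℕ × ℤ → B` is a valid `Θ`-tiling of the H-graph if the endpoint colours of
every labelled edge (in both directions, for the unoriented `x`- and `y`-edges) form a
triple in `Θ`; there is a `z`-labelled edge from `(m,n)` to `(m,n+1)` for every vertex. -/
def HValid {B : Type} (Θ : Set (B × HLab × B)) (τ : ℕ × ℤ → B) : Prop :=
  ∀ p : ℕ × ℤ,
    (τ p, HLab.z, τ (p.1, p.2 + 1)) ∈ Θ ∧
    (τ p, HLab.x, τ (xNbr p)) ∈ Θ ∧
    (τ p, HLab.y, τ (yNbr p)) ∈ Θ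

/-!
Colour the vertex `(m, n)` by the parity of `m`, whether `m = 0`, whether `m + 1` is a power of
two (`last`), the sign of `n`, and whether `2 ^ ⌊log₂ m⌋ ∣ n` (`first`). For `n ≠ 0` the `x`- and
`y`-edges cut row `n` into blocks of `2 ^ (v₂ n + 1)` consecutive columns, and `first` says that
`m` lies in the first block; the horoball consists of the vertices in the last column of the first
block of their row.

The `z`-edges copy the column data and advance the sign, so the seed determines row `0`, where all
`y`-edges are present, and from it the parity, `m = 0` and the sign everywhere. Then `first` spreads
from column `0` to the right along the edges of each row and is switched off exactly where a
`y`-loop breaks the row. Finally `last`, constant along columns, is read off a single row: one in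
which column `m` ends the first block if `m + 1` is a power of two, one in which it carries a
`y`-edge outside the first block otherwise.
-/

lemma two_pow_log_pred_dvd_iff {k : ℕ} {n : ℤ} (h : (2 : ℤ) ^ padicValNat 2 k ∣ n) :
    (2 : ℤ) ^ Nat.log 2 (k - 1) ∣ n ↔ (2 : ℤ) ^ Nat.log 2 k ∣ n := by
  -- the logarithm only jumps at a power of two `k`, and there `v₂ k = log k`
  rcases (Nat.log_mono_right (b := 2) (Nat.sub_le k 1)).eq_or_lt with heq | hlt
  · rw [heq]
  · have hk : k ≠ 0 := by rintro rfl; simp at hlt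
    have hpow : k = 2 ^ Nat.log 2 k := by
      have h1 := Nat.pow_log_le_self 2 hk
      have h2 := Nat.lt_pow_succ_log_self one_lt_two (k - 1)
      have h3 := Nat.pow_le_pow_right two_pos hlt
      omega
    rw [hpow, padicValNat.prime_pow] at h
    exact iff_of_true ((pow_dvd_pow 2 hlt.le).trans h) h

lemma two_pow_dvd_two_pow_iff {a b : ℕ} : (2 : ℤ) ^ a ∣ 2 ^ b ↔ a ≤ b :=
  pow_dvd_pow_iff two_ne_zero (by norm_num [Int.isUnit_iff])

lemma succ_eq_two_pow_of_log_le {m : ℕ} (hm : m ≠ 0) (h : Nat.log 2 m ≤ padicValNat 2 (m + 1)) :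
    m + 1 = 2 ^ (Nat.log 2 m + 1) := by
  -- `m + 1` is a multiple of `2 ^ log m` in the interval `(2 ^ log m, 2 ^ (log m + 1)]`
  obtain ⟨q, hq⟩ := (pow_dvd_pow 2 h).trans pow_padicValNat_dvd
  have h1 := Nat.pow_log_le_self 2 hm
  have h2 := Nat.lt_pow_succ_log_self one_lt_two m
  rw [pow_succ] at h2 ⊢
  generalize 2 ^ Nat.log 2 m = P at *
  have hq2 : q = 2 := by
    have : 1 < q := by nlinarith
    have : q < 3 := by nlinarith
    omega
  rw [hq, hq2]

@[ext] structure Colour where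
  odd : Bool
  origin : Bool
  last : Bool
  sign : SignType
  first : Bool
deriving Fintype

noncomputable def canonicalTiling (p : ℕ × ℤ) : Colour where
  odd := decide (p.1 % 2 = 1)
  origin := decide (p.1 = 0)
  last := decide (p.1 + 1 = 2 ^ (Nat.log 2 p.1 + 1))
  sign := SignType.sign p.2
  first := decide ((2 : ℤ) ^ Nat.log 2 p.1 ∣ p.2)

def SignStep (s t : SignType) : Prop := (s = -1 ∧ t ≠ 1) ∨ (s ≠ -1 ∧ t = 1)

def ZRule (c d : Colour) : Prop :=
  (c.origin = true → c.odd = false) ∧ (c.last = true → c.odd = true) ∧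
  d.odd = c.odd ∧ d.origin = c.origin ∧ d.last = c.last ∧ SignStep c.sign d.sign

def XRule (c d : Colour) : Prop := d.odd = !c.odd ∧ d.sign = c.sign ∧ d.first = c.first

def LoopRule (c : Colour) : Prop :=
  (c.sign = 0 → c.origin = true) ∧ (c.origin = true → c.first = true) ∧
  (c.odd = false → c.first = true → c.origin = true) ∧
  (c.odd = true → c.first = true → c.last = true)

def EdgeRule (c d : Colour) : Prop :=
  XRule c d ∧ c.origin = false ∧ (c.odd = true → c.last = true → c.first = true)

def YRule (c d : Colour) : Prop := (d = c ∧ LoopRule c) ∨ EdgeRule c d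

def horoballTileset : Set (Colour × HLab × Colour) := {t | match t with
  | (c, .z, d) => ZRule c d
  | (c, .x, d) => XRule c d
  | (c, .y, d) => YRule c d}

lemma YRule.loopRule {c : Colour} (h : YRule c c) : LoopRule c := by
  rcases h with ⟨-, h⟩ | ⟨⟨h, -⟩, -⟩
  · exact h
  · cases hc : c.odd <;> simp [hc] at h

lemma YRule.edgeRule {c d : Colour} (h : YRule c d) (hcd : c.odd ≠ d.odd) : EdgeRule c d :=
  h.resolve_left fun ⟨hdc, _⟩ => hcd (by rw [hdc])

lemma xNbr_of_even {m : ℕ} (hm : m % 2 = 0) (n : ℤ) : xNbr (m, n) = (m + 1, n) := by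
  simp [xNbr, hm]

lemma xNbr_of_odd {m : ℕ} (hm : m % 2 = 1) (n : ℤ) : xNbr (m, n) = (m - 1, n) := by
  simp [xNbr, hm]

lemma yNbr_zero (n : ℤ) : yNbr (0, n) = (0, n) := by simp [yNbr]

lemma yNbr_of_odd {m : ℕ} (hm : m % 2 = 1) (n : ℤ) :
    yNbr (m, n) = if (2 : ℤ) ^ padicValNat 2 (m + 1) ∣ n then (m + 1, n) else (m, n) := by
  simp [yNbr, hm, show m ≠ 0 by omega]

lemma yNbr_of_even {m : ℕ} (hm : m % 2 = 0) (h0 : m ≠ 0) (n : ℤ) :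
    yNbr (m, n) = if (2 : ℤ) ^ padicValNat 2 m ∣ n then (m - 1, n) else (m, n) := by
  simp [yNbr, hm, h0]

lemma yNbr_eq_self_iff {m : ℕ} {n : ℤ} :
    yNbr (m, n) = (m, n) ↔ m = 0 ∨ ¬(2 : ℤ) ^ padicValNat 2 (m + m % 2) ∣ n := by
  rcases Nat.mod_two_eq_zero_or_one m with hm | hm
  · rcases eq_or_ne m 0 with rfl | h0
    · simp [yNbr_zero]
    · rw [yNbr_of_even hm h0, hm, add_zero]
      split_ifs with h <;> simp [h, h0]
      omega
  · rw [yNbr_of_odd hm, hm]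
    split_ifs with h <;> simp [h]
    omega

lemma signStep_sign (n : ℤ) : SignStep (SignType.sign n) (SignType.sign (n + 1)) := by
  rcases lt_or_ge n 0 with hn | hn
  · left; simp [sign_eq_one_iff, hn]
  · right; simp [sign_eq_neg_one_iff, sign_eq_one_iff]; omega

lemma canonicalTiling_first_pred {k : ℕ} {n : ℤ} (h : (2 : ℤ) ^ padicValNat 2 k ∣ n) :
    (canonicalTiling (k - 1, n)).first = (canonicalTiling (k, n)).first :=
  decide_eq_decide.mpr (two_pow_log_pred_dvd_iff h)

lemma odd_of_succ_eq_two_pow {m L : ℕ} (h : m + 1 = 2 ^ (L + 1)) : m % 2 = 1 := by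
  rw [pow_succ] at h; omega

lemma zRule_canonicalTiling (p : ℕ × ℤ) :
    ZRule (canonicalTiling p) (canonicalTiling (p.1, p.2 + 1)) := by
  refine ⟨fun h => ?_, fun h => ?_, rfl, rfl, rfl, signStep_sign p.2⟩
  · simp_all [canonicalTiling]
  · simp only [canonicalTiling, decide_eq_true_eq] at h ⊢
    exact odd_of_succ_eq_two_pow h

lemma canonicalTiling_first_pred_of_odd {k : ℕ} (hk : k % 2 = 1) (n : ℤ) :
    (canonicalTiling (k - 1, n)).first = (canonicalTiling (k, n)).first :=
  canonicalTiling_first_pred (by simp [padicValNat.eq_zero_of_not_dvd (show ¬2 ∣ k by omega)])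

lemma xRule_canonicalTiling (p : ℕ × ℤ) :
    XRule (canonicalTiling p) (canonicalTiling (xNbr p)) := by
  obtain ⟨m, n⟩ := p
  rcases Nat.mod_two_eq_zero_or_one m with hm | hm
  · rw [xNbr_of_even hm]
    refine ⟨by simp [canonicalTiling, hm, show (m + 1) % 2 = 1 by omega], rfl, ?_⟩
    simpa using (canonicalTiling_first_pred_of_odd (k := m + 1) (by omega) n).symm
  · rw [xNbr_of_odd hm]
    refine ⟨by simp [canonicalTiling, hm, show (m - 1) % 2 = 0 by omega], rfl, ?_⟩
    exact canonicalTiling_first_pred_of_odd hm n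

lemma loopRule_canonicalTiling {m : ℕ} {n : ℤ} (h : yNbr (m, n) = (m, n)) :
    LoopRule (canonicalTiling (m, n)) := by
  rw [yNbr_eq_self_iff] at h
  simp only [LoopRule, canonicalTiling, sign_eq_zero_iff, decide_eq_true_eq,
    decide_eq_false_iff_not]
  refine ⟨?_, fun h0 => by simp [h0], fun hm hdvd => ?_, fun hm hdvd => ?_⟩
  · rintro rfl
    simpa using h
  · rw [show m % 2 = 0 by omega, add_zero] at h
    by_contra h0
    exact (h.resolve_left h0) ((pow_dvd_pow 2 (padicValNat_le_nat_log m)).trans hdvd)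
  · rw [hm] at h
    refine succ_eq_two_pow_of_log_le (by omega) (le_of_lt (lt_of_not_ge fun hle => ?_))
    exact (h.resolve_left (by omega)) ((pow_dvd_pow 2 hle).trans hdvd)

lemma edgeRule_canonicalTiling {m : ℕ} {n : ℤ} (h : yNbr (m, n) ≠ (m, n)) :
    EdgeRule (canonicalTiling (m, n)) (canonicalTiling (yNbr (m, n))) := by
  rw [Ne, yNbr_eq_self_iff, not_or, not_not] at h
  obtain ⟨h0, hdvd⟩ := h
  rcases Nat.mod_two_eq_zero_or_one m with hm | hm
  · rw [hm, add_zero] at hdvd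
    rw [yNbr_of_even hm h0, if_pos hdvd]
    refine ⟨⟨?_, rfl, canonicalTiling_first_pred hdvd⟩, by simpa [canonicalTiling], ?_⟩
    · simp [canonicalTiling, hm, show (m - 1) % 2 = 1 by omega]
    · simp [canonicalTiling, hm]
  · rw [hm] at hdvd
    rw [yNbr_of_odd hm, if_pos hdvd]
    refine ⟨⟨?_, rfl, ?_⟩, by simpa [canonicalTiling], ?_⟩
    · simp [canonicalTiling, hm, show (m + 1) % 2 = 0 by omega]
    · simpa using (canonicalTiling_first_pred hdvd).symm
    · simp only [canonicalTiling, decide_eq_true_eq]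
      intro _ hlast
      rw [hlast, padicValNat.prime_pow] at hdvd
      exact (pow_dvd_pow 2 (Nat.le_succ _)).trans hdvd

lemma yRule_canonicalTiling (p : ℕ × ℤ) :
    YRule (canonicalTiling p) (canonicalTiling (yNbr p)) := by
  by_cases h : yNbr p = p
  · exact .inl ⟨by rw [h], loopRule_canonicalTiling h⟩
  · exact .inr (edgeRule_canonicalTiling h)

theorem hValid_canonicalTiling : HValid horoballTileset canonicalTiling := fun p =>
  ⟨zRule_canonicalTiling p, xRule_canonicalTiling p, yRule_canonicalTiling p⟩

lemma eq_sign_of_signStep {f : ℤ → SignType} (h0 : f 0 = 0)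
    (h : ∀ n, SignStep (f n) (f (n + 1))) (n : ℤ) : f n = SignType.sign n := by
  induction n using Int.induction_on with
  | zero => simpa using h0
  | succ i ih =>
    rcases h i with ⟨hi, -⟩ | ⟨-, hi⟩
    · rw [ih, sign_eq_neg_one_iff] at hi; omega
    · rw [hi, eq_comm, sign_eq_one_iff]; omega
  | pred i ih =>
    rcases h (-i - 1) with ⟨hi, -⟩ | ⟨-, hi⟩
    · rw [hi, eq_comm, sign_eq_neg_one_iff]; omega
    · rw [sub_add_cancel, ih, sign_eq_one_iff] at hi; omega

section Uniqueness

variable {τ : ℕ × ℤ → Colour}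

lemma HValid.zRule (hτ : HValid horoballTileset τ) (p : ℕ × ℤ) : ZRule (τ p) (τ (p.1, p.2 + 1)) :=
  (hτ p).1

lemma HValid.xRule (hτ : HValid horoballTileset τ) (p : ℕ × ℤ) : XRule (τ p) (τ (xNbr p)) := (hτ p).2.1

lemma HValid.yRule (hτ : HValid horoballTileset τ) (p : ℕ × ℤ) : YRule (τ p) (τ (yNbr p)) := (hτ p).2.2

lemma column_eq (hτ : HValid horoballTileset τ) (m : ℕ) (n : ℤ) :
    (τ (m, n)).odd = (τ (m, 0)).odd ∧ (τ (m, n)).origin = (τ (m, 0)).origin ∧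
      (τ (m, n)).last = (τ (m, 0)).last := by
  have hper : Function.Periodic
      (fun n : ℤ => ((τ (m, n)).odd, (τ (m, n)).origin, (τ (m, n)).last)) 1 := by
    intro n
    obtain ⟨-, -, hodd, horigin, hlast, -⟩ := hτ.zRule (m, n)
    simp [hodd, horigin, hlast]
  simpa using hper.int_mul_eq n

lemma row_zero (hτ : HValid horoballTileset τ) (hseed : τ (0, 0) = canonicalTiling (0, 0)) (m : ℕ) :
    (τ (m, 0)).odd = (canonicalTiling (m, 0)).odd ∧
      (τ (m, 0)).origin = (canonicalTiling (m, 0)).origin ∧ (τ (m, 0)).sign = 0 := by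
  induction m with
  | zero => rw [hseed]; simp [canonicalTiling]
  | succ m ih =>
    obtain ⟨hodd, horigin, hsign⟩ := ih
    rcases Nat.mod_two_eq_zero_or_one m with hm | hm
    · obtain ⟨hx_odd, hx_sign, -⟩ : XRule (τ (m, 0)) (τ (m + 1, 0)) := by
        simpa [xNbr_of_even hm] using hτ.xRule (m, 0)
      have hodd' : (τ (m + 1, 0)).odd = true := by
        simp [hx_odd, hodd, canonicalTiling, hm]
      have horigin' : (τ (m + 1, 0)).origin = false := by
        by_contra h
        simp [(hτ.zRule (m + 1, 0)).1 (by simpa using h)] at hodd'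
      refine ⟨by simp [hodd', canonicalTiling]; omega, by simp [horigin', canonicalTiling],
        hx_sign.trans hsign⟩
    · have hy : YRule (τ (m + 1, 0)) (τ (m, 0)) := by
        simpa [yNbr_of_even (show (m + 1) % 2 = 0 by omega)] using hτ.yRule (m + 1, 0)
      rcases hy with ⟨hdc, hloop⟩ | ⟨⟨hy_odd, hy_sign, -⟩, horigin', -⟩
      · rw [← hdc] at hloop
        simp [hloop.1 hsign, canonicalTiling] at horigin
        omega
      · refine ⟨?_, by simp [horigin', canonicalTiling], hy_sign ▸ hsign⟩
        rw [← Bool.not_not (τ (m + 1, 0)).odd, ← hy_odd, hodd]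
        simp [canonicalTiling, hm, show (m + 1) % 2 = 0 by omega]

lemma odd_origin_sign_eq (hτ : HValid horoballTileset τ) (hseed : τ (0, 0) = canonicalTiling (0, 0))
    (p : ℕ × ℤ) : (τ p).odd = (canonicalTiling p).odd ∧
      (τ p).origin = (canonicalTiling p).origin ∧ (τ p).sign = (canonicalTiling p).sign := by
  obtain ⟨m, n⟩ := p
  obtain ⟨hodd, horigin, hsign⟩ := row_zero hτ hseed m
  obtain ⟨hodd', horigin', -⟩ := column_eq hτ m n
  refine ⟨hodd'.trans hodd, horigin'.trans horigin, ?_⟩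
  exact eq_sign_of_signStep (f := fun n => (τ (m, n)).sign) hsign
    (fun n => (hτ.zRule (m, n)).2.2.2.2.2) n

lemma first_eq (hτ : HValid horoballTileset τ) (hseed : τ (0, 0) = canonicalTiling (0, 0))
    (m : ℕ) (n : ℤ) : (τ (m, n)).first = (canonicalTiling (m, n)).first := by
  have hstatic := odd_origin_sign_eq hτ hseed
  induction m with
  | zero =>
    have hloop : LoopRule (τ (0, n)) := YRule.loopRule (by simpa [yNbr_zero] using hτ.yRule (0, n))
    rw [hloop.2.1 (by simp [(hstatic _).2.1, canonicalTiling])]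
    simp [canonicalTiling]
  | succ m ih =>
    rcases Nat.mod_two_eq_zero_or_one m with hm | hm
    · have hx : XRule (τ (m, n)) (τ (m + 1, n)) := by
        simpa [xNbr_of_even hm] using hτ.xRule (m, n)
      rw [hx.2.2, ih]
      simpa using canonicalTiling_first_pred_of_odd (k := m + 1) (by omega) n
    · have hm' : (m + 1) % 2 = 0 := by omega
      by_cases hdvd : (2 : ℤ) ^ padicValNat 2 (m + 1) ∣ n
      · have hy : YRule (τ (m + 1, n)) (τ (m, n)) := by
          simpa [yNbr_of_even hm', hdvd] using hτ.yRule (m + 1, n)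
        have hedge := hy.edgeRule (by simp [(hstatic _).1, canonicalTiling, hm, hm'])
        rw [← hedge.1.2.2, ih]
        simpa using canonicalTiling_first_pred hdvd
      · have hy : YRule (τ (m + 1, n)) (τ (m + 1, n)) := by
          simpa [yNbr_of_even hm', hdvd] using hτ.yRule (m + 1, n)
        have hfirst : ¬(2 : ℤ) ^ Nat.log 2 (m + 1) ∣ n := fun h =>
          hdvd ((pow_dvd_pow 2 (padicValNat_le_nat_log _)).trans h)
        have hloop := hy.loopRule.2.2.1
        simp only [(hstatic _).1, (hstatic _).2.1, canonicalTiling, hm'] at hloop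
        simpa [canonicalTiling, hfirst] using hloop

lemma last_eq_true (hτ : HValid horoballTileset τ) (hseed : τ (0, 0) = canonicalTiling (0, 0)) {m : ℕ}
    (hm : m % 2 = 1) (hlast : m + 1 = 2 ^ (Nat.log 2 m + 1)) : (τ (m, 0)).last = true := by
  -- in row `2 ^ log m`, column `m` ends the first block: it is in it and carries a `y`-loop
  set n : ℤ := 2 ^ Nat.log 2 m
  have hv : padicValNat 2 (m + 1) = Nat.log 2 m + 1 := by rw [hlast, padicValNat.prime_pow]
  have hloop : LoopRule (τ (m, n)) := YRule.loopRule <| by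
    simpa [n, yNbr_of_odd hm, hv, two_pow_dvd_two_pow_iff] using hτ.yRule (m, n)
  rw [← (column_eq hτ m n).2.2]
  refine hloop.2.2.2 ?_ ?_
  · simp [(odd_origin_sign_eq hτ hseed _).1, canonicalTiling, hm]
  · simp [first_eq hτ hseed, canonicalTiling, n]

lemma last_eq_false (hτ : HValid horoballTileset τ) (hseed : τ (0, 0) = canonicalTiling (0, 0)) {m : ℕ}
    (hm : m % 2 = 1) (hlast : m + 1 ≠ 2 ^ (Nat.log 2 m + 1)) : (τ (m, 0)).last = false := by
  -- in row `2 ^ v₂ (m + 1)`, column `m` carries a `y`-edge but lies outside the first block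
  set n : ℤ := 2 ^ padicValNat 2 (m + 1)
  have hlt : padicValNat 2 (m + 1) < Nat.log 2 m :=
    lt_of_not_ge fun h => hlast (succ_eq_two_pow_of_log_le (by omega) h)
  have hy : YRule (τ (m, n)) (τ (m + 1, n)) := by
    simpa [n, yNbr_of_odd hm] using hτ.yRule (m, n)
  have hedge := hy.edgeRule <| by
    simp [(odd_origin_sign_eq hτ hseed _).1, canonicalTiling, hm, show (m + 1) % 2 = 0 by omega]
  have hfirst : (τ (m, n)).first = false := by
    simp [first_eq hτ hseed, canonicalTiling, n, two_pow_dvd_two_pow_iff, hlt]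
  rw [← (column_eq hτ m n).2.2]
  by_contra h
  simp [hedge.2.2 (by simp [(odd_origin_sign_eq hτ hseed _).1, canonicalTiling, hm])
    (by simpa using h)] at hfirst

lemma last_eq (hτ : HValid horoballTileset τ) (hseed : τ (0, 0) = canonicalTiling (0, 0)) (m : ℕ) :
    (τ (m, 0)).last = (canonicalTiling (m, 0)).last := by
  rcases Nat.mod_two_eq_zero_or_one m with hm | hm
  · have hlast : (τ (m, 0)).last = false := by
      by_contra h
      simpa [(hτ.zRule (m, 0)).2.1 (by simpa using h), canonicalTiling, hm] using
        (odd_origin_sign_eq hτ hseed (m, 0)).1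
    rw [hlast]
    simpa [canonicalTiling] using fun h => by have := odd_of_succ_eq_two_pow h; omega
  · by_cases hlast : m + 1 = 2 ^ (Nat.log 2 m + 1)
    · simp [last_eq_true hτ hseed hm hlast, canonicalTiling, hlast]
    · simp [last_eq_false hτ hseed hm hlast, canonicalTiling, hlast]

theorem eq_canonicalTiling (hτ : HValid horoballTileset τ) (hseed : τ (0, 0) = canonicalTiling (0, 0)) :
    τ = canonicalTiling := by
  funext ⟨m, n⟩
  obtain ⟨hodd, horigin, hsign⟩ := odd_origin_sign_eq hτ hseed (m, n)
  exact Colour.ext hodd horigin ((column_eq hτ m n).2.2.trans (last_eq hτ hseed m)) hsign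
    (first_eq hτ hseed m n)

end Uniqueness

lemma canonicalTiling_first_and_last_iff (p : ℕ × ℤ) :
    (canonicalTiling p).first = true ∧ (canonicalTiling p).last = true ↔
      ∃ (s : ℕ) (k : ℤ), p.1 = 2 ^ (s + 1) - 1 ∧ p.2 = 2 ^ s * k := by
  obtain ⟨m, n⟩ := p
  simp only [canonicalTiling, decide_eq_true_eq]
  constructor
  · rintro ⟨⟨k, hk⟩, hlast⟩
    exact ⟨Nat.log 2 m, k, by omega, hk⟩
  · rintro ⟨s, k, rfl, rfl⟩
    have hpos := Nat.one_le_two_pow (n := s)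
    have hlog : Nat.log 2 (2 ^ (s + 1) - 1) = s :=
      Nat.log_eq_of_pow_le_of_lt_pow (by rw [pow_succ]; omega) (by omega)
    rw [hlog]
    exact ⟨dvd_mul_right _ _, by omega⟩

/-- There is a tileset `Θ₀` over a finite colour set `B₀` with a seed colour `a₀` and a set
`C ⊆ B₀` of colours such that the H-graph admits a unique valid `Θ₀`-tiling `τ` with
`τ (0,0) = a₀`, and this tiling colours a vertex `(m,n)` inside `C` exactly when
`(m,n) = (2^(s+1) - 1, 2^s k)` for some `s ≥ 0`, `k ∈ ℤ`, i.e. the colours in `C` mark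
exactly the vertex set of the hyperbolic horoball. -/
theorem hgraph_unique_seeded_tiling_marks_horoball :
    ∃ (B₀ : Type) (_ : Fintype B₀) (Θ₀ : Set (B₀ × HLab × B₀)) (a₀ : B₀) (C : Set B₀),
      (∃! τ : ℕ × ℤ → B₀, HValid Θ₀ τ ∧ τ (0, 0) = a₀) ∧
      ∀ τ : ℕ × ℤ → B₀, HValid Θ₀ τ → τ (0, 0) = a₀ →
        ∀ p : ℕ × ℤ,
          (τ p ∈ C ↔ ∃ (s : ℕ) (k : ℤ), p.1 = 2 ^ (s + 1) - 1 ∧ p.2 = 2 ^ s * k) := by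
  refine ⟨Colour, inferInstance, horoballTileset, canonicalTiling (0, 0),
    {c | c.first = true ∧ c.last = true}, ⟨canonicalTiling, ⟨hValid_canonicalTiling, rfl⟩,
      fun τ hτ => eq_canonicalTiling hτ.1 hτ.2⟩, fun τ hτ hseed p => ?_⟩
  rw [eq_canonicalTiling hτ hseed]
  exact canonicalTiling_first_and_last_iff p
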